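/- Let C be a nonempty closed convex subset of a real Hilbert space H, let ε > 0, let β > 0, let ψ : ℝ → ℝ be even, convex, and differentiable with a β-Lipschitzian derivative, and set h = ψ ∘ max(d_C − ε, 0). Then h : H → ℝ is convex and Fréchet differentiable with a β-Lipschitzian gradient, and for every x ∈ H the gradient of h at x equals (ψ'(d_C(x) − ε)/d_C(x)) (x − proj_C x) if d_C(x) > ε, and equals 0 if d_C(x) ≤ ε. -/

import Mathlib

/-!
The function `φ = max (d_C - ε) 0` is the distance to the `ε`-thickening of `C`. At each `x`,
with `u` the unit normal `(x - proj_C x) / d_C x` (or `0` where `φ x = 0`), it satisfies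
`φ x + ⟪u, y - x⟫ ≤ φ y` and `φ y ^ 2 ≤ φ x ^ 2 + 2 φ x ⟪u, y - x⟫ + ‖y - x‖ ^ 2`.
Since `ψ'` vanishes at `0`, is monotone and `β`-Lipschitz, `0 ≤ ψ' t ≤ β t` for `t ≥ 0`; with the
tangent inequality of `ψ` and its descent lemma this gives, for `G x = ψ' (φ x) • u`,
`h x + ⟪G x, y - x⟫ ≤ h y ≤ h x + ⟪G x, y - x⟫ + β / 2 * ‖y - x‖ ^ 2`.
The two-sided bound makes `G` the gradient of `h`, the lower bound gives convexity, and together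
they give the Baillon–Haddad cocoercivity `‖G x - G y‖ ^ 2 ≤ β ⟪G x - G y, x - y⟫`, hence the
`β`-Lipschitz continuity of `G`.
-/

open Metric Set Filter Topology
open scoped NNReal RealInnerProductSpace

section RealFunction

variable {ψ ψ' : ℝ → ℝ}

lemma ConvexOn.add_mul_sub_le_of_hasDerivAt (hψ : ConvexOn ℝ univ ψ) {a c : ℝ}
    (hderiv : HasDerivAt ψ c a) (b : ℝ) : ψ a + c * (b - a) ≤ ψ b := by
  rcases lt_trichotomy a b with hab | rfl | hab
  · have := hψ.le_slope_of_hasDerivAt (mem_univ a) (mem_univ b) hab hderiv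
    rw [slope_def_field, le_div_iff₀ (sub_pos.2 hab)] at this
    linarith
  · simp
  · have := hψ.slope_le_of_hasDerivAt (mem_univ b) (mem_univ a) hab hderiv
    rw [slope_def_field, div_le_iff₀ (sub_pos.2 hab)] at this
    linarith

lemma hasDerivAt_zero_eq_zero_of_even (heven : ∀ t, ψ (-t) = ψ t) {c : ℝ}
    (hderiv : HasDerivAt ψ c 0) : c = 0 := by
  have hneg : HasDerivAt (fun t => ψ (-t)) (c * -1) 0 :=
    (neg_zero (G := ℝ) ▸ hderiv).comp (0 : ℝ) (hasDerivAt_neg (0 : ℝ))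
  rw [funext heven] at hneg
  linarith [hneg.unique hderiv]

/-- A `K`-Lipschitz derivative makes `K / 2 * t ^ 2 - ψ t` convex; its tangent line inequality
is the descent lemma. -/
lemma le_add_mul_sub_add_sq_of_lipschitzWith {K : ℝ≥0} (hderiv : ∀ t, HasDerivAt ψ (ψ' t) t)
    (hlip : LipschitzWith K ψ') (a b : ℝ) :
    ψ b ≤ ψ a + ψ' a * (b - a) + K / 2 * (b - a) ^ 2 := by
  have hq : ∀ t, HasDerivAt (fun t => K / 2 * t ^ 2 - ψ t) (K * t - ψ' t) t := fun t => by
    refine (((hasDerivAt_pow 2 t).const_mul ((K : ℝ) / 2)).sub (hderiv t)).congr_deriv ?_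
    norm_num
    ring
  have hmono : Monotone fun t => K * t - ψ' t := fun s t hst => by
    have := (le_abs_self _).trans (hlip.dist_le_mul t s)
    rw [Real.dist_eq, abs_of_nonneg (sub_nonneg.2 hst)] at this
    dsimp only
    linarith
  have hconv : ConvexOn ℝ univ fun t => K / 2 * t ^ 2 - ψ t := by
    refine Monotone.convexOn_univ_of_deriv (fun t => (hq t).differentiableAt) ?_
    rwa [funext fun t => (hq t).deriv]
  have := hconv.add_mul_sub_le_of_hasDerivAt (hq a) b
  nlinarith

lemma ConvexOn.deriv_nonneg_of_nonneg (hψ : ConvexOn ℝ univ ψ)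
    (hderiv : ∀ t, HasDerivAt ψ (ψ' t) t) (h0 : ψ' 0 = 0) {t : ℝ} (ht : 0 ≤ t) : 0 ≤ ψ' t := by
  have hmono := hψ.monotoneOn_deriv fun t _ => (hderiv t).differentiableAt
  rw [funext fun t => (hderiv t).deriv] at hmono
  exact h0 ▸ hmono (mem_univ 0) (mem_univ t) ht

lemma ConvexOn.add_mul_le_of_add_le (hψ : ConvexOn ℝ univ ψ) {s t a c : ℝ}
    (hderiv : HasDerivAt ψ c s) (hc : 0 ≤ c) (hst : s + a ≤ t) : ψ s + c * a ≤ ψ t := by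
  have := hψ.add_mul_sub_le_of_hasDerivAt hderiv t
  nlinarith

lemma le_add_mul_add_sq_of_sq_le {K : ℝ≥0} (hderiv : ∀ t, HasDerivAt ψ (ψ' t) t)
    (hlip : LipschitzWith K ψ') (h0 : ψ' 0 = 0) {s t a r : ℝ} (hs : 0 ≤ s)
    (hst : s + a ≤ t) (hsq : t ^ 2 ≤ s ^ 2 + 2 * s * a + r ^ 2) :
    ψ t ≤ ψ s + ψ' s * a + K / 2 * r ^ 2 := by
  have hdescent := le_add_mul_sub_add_sq_of_lipschitzWith hderiv hlip s t
  have hcK : ψ' s ≤ K * s := by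
    have := (le_abs_self _).trans (hlip.dist_le_mul s 0)
    rwa [h0, sub_zero, Real.dist_eq, sub_zero, abs_of_nonneg hs] at this
  have hKs : ψ' s * (t - s - a) ≤ K * s * (t - s - a) :=
    mul_le_mul_of_nonneg_right hcK (by linarith)
  have hr : (t - s) ^ 2 + 2 * s * (t - s - a) ≤ r ^ 2 := by nlinarith
  nlinarith [mul_le_mul_of_nonneg_left hr (NNReal.coe_nonneg K)]

end RealFunction

section Gradient

variable {E : Type*} [NormedAddCommGroup E] [InnerProductSpace ℝ E] {f : E → ℝ}

lemma hasGradientAt_of_abs_sub_sub_inner_le [CompleteSpace E] {g x : E} (K : ℝ)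
    (hf : ∀ y, |f y - f x - ⟪g, y - x⟫| ≤ K * ‖y - x‖ ^ 2) : HasGradientAt f g x := by
  rw [hasGradientAt_iff_isLittleO]
  have hsq : (fun y => ‖y - x‖ ^ 2) =o[𝓝 x] fun y => y - x :=
    (Asymptotics.isLittleO_norm_pow_id one_lt_two).comp_tendsto
      (tendsto_sub_nhds_zero_iff.2 tendsto_id)
  refine (Asymptotics.IsBigO.of_bound K (Eventually.of_forall fun y => ?_)).trans_isLittleO hsq
  simpa only [Real.norm_eq_abs, norm_pow, norm_norm, abs_norm] using hf y

variable {G : E → E}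

lemma convexOn_univ_of_add_inner_le (hlow : ∀ x y, f x + ⟪G x, y - x⟫ ≤ f y) :
    ConvexOn ℝ univ f := by
  refine ⟨convex_univ, fun x _ y _ a b ha hb hab => ?_⟩
  set z := a • x + b • y
  have hz : a • (x - z) + b • (y - z) = 0 := by
    rw [smul_sub, smul_sub, sub_add_sub_comm, ← add_smul, hab, one_smul, sub_self]
  have hinner : a * ⟪G z, x - z⟫ + b * ⟪G z, y - z⟫ = 0 := by
    rw [← real_inner_smul_right, ← real_inner_smul_right, ← inner_add_right, hz, inner_zero_right]
  have hx := mul_le_mul_of_nonneg_left (hlow z x) ha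
  have hy := mul_le_mul_of_nonneg_left (hlow z y) hb
  have hfz : a * f z + b * f z = f z := by rw [← add_mul, hab, one_mul]
  simp only [smul_eq_mul]
  linarith

/-- Baillon–Haddad: apply the lower bound at `p` and the upper bound at `q` to the point
`q - K⁻¹ • (G q - G p)`. -/
lemma add_inner_add_sq_norm_sub_le {K : ℝ} (hK : 0 < K)
    (hlow : ∀ x y, f x + ⟪G x, y - x⟫ ≤ f y)
    (hup : ∀ x y, f y ≤ f x + ⟪G x, y - x⟫ + K / 2 * ‖y - x‖ ^ 2) (p q : E) :
    f p + ⟪G p, q - p⟫ + K⁻¹ / 2 * ‖G q - G p‖ ^ 2 ≤ f q := by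
  set w := G q - G p
  have h1 := hlow p (q - K⁻¹ • w)
  have h2 := hup q (q - K⁻¹ • w)
  rw [sub_sub_cancel_left, norm_neg, norm_smul, Real.norm_eq_abs, abs_of_pos (inv_pos.2 hK),
    inner_neg_right, real_inner_smul_right] at h2
  rw [sub_right_comm, inner_sub_right, real_inner_smul_right] at h1
  have hw : K⁻¹ * ⟪G q, w⟫ - K⁻¹ * ⟪G p, w⟫ = K⁻¹ * ‖w‖ ^ 2 := by
    rw [← mul_sub, ← inner_sub_left, real_inner_self_eq_norm_sq]
  have hK' : K / 2 * (K⁻¹ * ‖w‖) ^ 2 = K⁻¹ / 2 * ‖w‖ ^ 2 := by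
    field_simp
  linarith

lemma lipschitzWith_of_add_inner_le_of_le_add_inner_add_sq {K : ℝ≥0} (hK : 0 < K)
    (hlow : ∀ x y, f x + ⟪G x, y - x⟫ ≤ f y)
    (hup : ∀ x y, f y ≤ f x + ⟪G x, y - x⟫ + K / 2 * ‖y - x‖ ^ 2) :
    LipschitzWith K G := by
  refine LipschitzWith.of_dist_le_mul fun x y => ?_
  rw [dist_eq_norm, dist_eq_norm]
  have hxy := add_inner_add_sq_norm_sub_le (NNReal.coe_pos.2 hK) hlow hup y x
  have hyx := add_inner_add_sq_norm_sub_le (NNReal.coe_pos.2 hK) hlow hup x y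
  have hcoc : ‖G x - G y‖ ^ 2 ≤ K * ⟪G x - G y, x - y⟫ := by
    rw [norm_sub_rev (G y)] at hyx
    have : ⟪G y, x - y⟫ + ⟪G x, y - x⟫ = -⟪G x - G y, x - y⟫ := by
      rw [inner_sub_left, ← neg_sub x y, inner_neg_right]
      ring
    have hK' : (K : ℝ) * ((K : ℝ)⁻¹ / 2 * ‖G x - G y‖ ^ 2) = ‖G x - G y‖ ^ 2 / 2 := by
      field_simp
    nlinarith
  have hcs := real_inner_le_norm (G x - G y) (x - y)
  rcases (norm_nonneg (G x - G y)).eq_or_lt with h0 | hpos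
  · rw [← h0]
    positivity
  · refine le_of_mul_le_mul_right ?_ hpos
    nlinarith

end Gradient

lemma infDist_eq_dist_of_forall_dist_le {α : Type*} [PseudoMetricSpace α] {s : Set α} {x p : α}
    (hp : p ∈ s) (hmin : ∀ y ∈ s, dist x p ≤ dist x y) : infDist x s = dist x p :=
  le_antisymm (infDist_le_dist_of_mem hp) ((le_infDist ⟨p, hp⟩).2 hmin)

section Distance

variable {E : Type*} [NormedAddCommGroup E] {C : Set E} {P : E → E}

lemma infDist_eq_norm_sub_of_forall_dist_le
    (hP : ∀ x, P x ∈ C ∧ ∀ y ∈ C, dist x (P x) ≤ dist x y) (x : E) :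
    infDist x C = ‖x - P x‖ := by
  rw [infDist_eq_dist_of_forall_dist_le (hP x).1 (hP x).2, dist_eq_norm]

variable [InnerProductSpace ℝ E]

lemma inner_sub_sub_nonpos_of_forall_dist_le (hC : Convex ℝ C) {x p z : E} (hp : p ∈ C)
    (hmin : ∀ y ∈ C, dist x p ≤ dist x y) (hz : z ∈ C) : ⟪x - p, z - p⟫ ≤ 0 := by
  have : Nonempty C := ⟨⟨p, hp⟩⟩
  refine (norm_eq_iInf_iff_real_inner_le_zero hC hp).1 ?_ z hz
  simp_rw [← dist_eq_norm, ← infDist_eq_iInf]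
  exact (infDist_eq_dist_of_forall_dist_le hp hmin).symm

lemma norm_inv_infDist_smul_sub (hP : ∀ x, P x ∈ C ∧ ∀ y ∈ C, dist x (P x) ≤ dist x y) {x : E}
    (hx : 0 < infDist x C) : ‖(infDist x C)⁻¹ • (x - P x)‖ = 1 := by
  rw [norm_smul, norm_inv, Real.norm_of_nonneg hx.le,
    ← infDist_eq_norm_sub_of_forall_dist_le hP x, inv_mul_cancel₀ hx.ne']

lemma infDist_add_inner_le (hC : Convex ℝ C)
    (hP : ∀ x, P x ∈ C ∧ ∀ y ∈ C, dist x (P x) ≤ dist x y) {x : E} (hx : 0 < infDist x C)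
    (y : E) : infDist x C + ⟪(infDist x C)⁻¹ • (x - P x), y - x⟫ ≤ infDist y C := by
  have hsplit : y - x = (y - P y) + (P y - P x) - (x - P x) := by abel
  have h1 := real_inner_le_norm (x - P x) (y - P y)
  have h2 := inner_sub_sub_nonpos_of_forall_dist_le hC (hP x).1 (hP x).2 (hP y).1
  have key : ⟪x - P x, y - x⟫ + infDist x C ^ 2 ≤ infDist x C * infDist y C := by
    rw [hsplit, inner_sub_right, inner_add_right, real_inner_self_eq_norm_sq,
      infDist_eq_norm_sub_of_forall_dist_le hP x, infDist_eq_norm_sub_of_forall_dist_le hP y]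
    linarith
  have : ⟪x - P x, y - x⟫ / infDist x C ≤ infDist y C - infDist x C := by
    rw [div_le_iff₀ hx]
    linarith
  rw [real_inner_smul_left, ← div_eq_inv_mul]
  linarith

lemma infDist_sq_le_add_inner (hP : ∀ x, P x ∈ C ∧ ∀ y ∈ C, dist x (P x) ≤ dist x y) {x : E}
    (hx : 0 < infDist x C) (y : E) :
    infDist y C ^ 2 ≤ infDist x C ^ 2 + 2 * infDist x C * ⟪(infDist x C)⁻¹ • (x - P x), y - x⟫
      + ‖y - x‖ ^ 2 := by
  have hle : infDist y C ≤ ‖(x - P x) + (y - x)‖ := by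
    rw [show x - P x + (y - x) = y - P x by abel, ← dist_eq_norm]
    exact infDist_le_dist_of_mem (hP x).1
  have hexp := norm_add_sq_real (x - P x) (y - x)
  rw [real_inner_smul_left, ← mul_assoc, mul_assoc 2, mul_inv_cancel₀ hx.ne', mul_one,
    infDist_eq_norm_sub_of_forall_dist_le hP x, ← hexp]
  exact pow_le_pow_left₀ infDist_nonneg hle 2

/-- Off the `ε`-thickening of `C` this is the gradient of `max (infDist · C - ε) 0`; on the
thickening `0` is a subgradient. -/
noncomputable def thickeningNormal (C : Set E) (P : E → E) (ε : ℝ) (x : E) : E :=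
  if ε < infDist x C then (infDist x C)⁻¹ • (x - P x) else 0

variable {ε : ℝ}

lemma max_infDist_sub_add_inner_thickeningNormal_le (hC : Convex ℝ C)
    (hP : ∀ x, P x ∈ C ∧ ∀ y ∈ C, dist x (P x) ≤ dist x y) (hε : 0 ≤ ε) (x y : E) :
    max (infDist x C - ε) 0 + ⟪thickeningNormal C P ε x, y - x⟫ ≤ max (infDist y C - ε) 0 := by
  unfold thickeningNormal
  split_ifs with hx
  · rw [max_eq_left (sub_nonneg.2 hx.le)]
    have := infDist_add_inner_le hC hP (hε.trans_lt hx) y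
    linarith [le_max_left (infDist y C - ε) 0]
  · rw [max_eq_right (sub_nonpos.2 (not_lt.1 hx)), inner_zero_left, add_zero]
    exact le_max_right _ _

lemma max_infDist_sub_sq_le (hC : Convex ℝ C)
    (hP : ∀ x, P x ∈ C ∧ ∀ y ∈ C, dist x (P x) ≤ dist x y) (hε : 0 ≤ ε) (x y : E) :
    max (infDist y C - ε) 0 ^ 2 ≤ max (infDist x C - ε) 0 ^ 2
      + 2 * max (infDist x C - ε) 0 * ⟪thickeningNormal C P ε x, y - x⟫ + ‖y - x‖ ^ 2 := by
  have hlip : infDist y C ≤ infDist x C + ‖y - x‖ := by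
    rw [← dist_eq_norm]
    exact infDist_le_infDist_add_dist
  unfold thickeningNormal
  split_ifs with hx
  · have hx0 := hε.trans_lt hx
    set a := ⟪(infDist x C)⁻¹ • (x - P x), y - x⟫
    have h1 := infDist_add_inner_le hC hP hx0 y
    have h2 := infDist_sq_le_add_inner hP hx0 y
    have h3 : |a| ≤ ‖y - x‖ := by
      simpa only [norm_inv_infDist_smul_sub hP hx0, one_mul] using
        abs_real_inner_le_norm ((infDist x C)⁻¹ • (x - P x)) (y - x)
    rw [max_eq_left (sub_nonneg.2 hx.le)]
    rcases le_total (infDist y C) ε with hy | hy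
    · rw [max_eq_right (sub_nonpos.2 hy)]
      nlinarith [sq_abs a, abs_nonneg a, sq_nonneg (infDist x C - ε + a)]
    · rw [max_eq_left (sub_nonneg.2 hy)]
      nlinarith
  · rw [max_eq_right (sub_nonpos.2 (not_lt.1 hx)), inner_zero_left]
    have hy : max (infDist y C - ε) 0 ≤ ‖y - x‖ :=
      max_le (by linarith [not_lt.1 hx]) (norm_nonneg _)
    nlinarith [le_max_right (infDist y C - ε) 0]

end Distance

theorem stmt_5_general {H : Type*} [NormedAddCommGroup H] [InnerProductSpace ℝ H] [CompleteSpace H]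
    (C : Set H) (hCconv : Convex ℝ C)
    (ε : ℝ) (hε : 0 < ε) (β : ℝ) (hβ : 0 < β)
    (ψ : ℝ → ℝ) (heven : ∀ t, ψ (-t) = ψ t) (hconv : ConvexOn ℝ Set.univ ψ)
    (ψ' : ℝ → ℝ) (hderiv : ∀ t, HasDerivAt ψ (ψ' t) t)
    (hlip : LipschitzWith (Real.toNNReal β) ψ')
    (h : H → ℝ) (hdef : ∀ x, h x = ψ (max (Metric.infDist x C - ε) 0))
    (projC : H → H)
    (hproj : ∀ x, projC x ∈ C ∧ ∀ y ∈ C, dist x (projC x) ≤ dist x y) :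
    ConvexOn ℝ Set.univ h ∧
    (∀ x, DifferentiableAt ℝ h x) ∧
    LipschitzWith (Real.toNNReal β) (fun x => gradient h x) ∧
    (∀ x : H,
      (ε < Metric.infDist x C → HasGradientAt h
        ((ψ' (Metric.infDist x C - ε) / Metric.infDist x C) • (x - projC x)) x) ∧
      (Metric.infDist x C ≤ ε → HasGradientAt h 0 x)) := by
  set G : H → H := fun x =>
    ψ' (max (infDist x C - ε) 0) • thickeningNormal C projC ε x
  have h0 : ψ' 0 = 0 := hasDerivAt_zero_eq_zero_of_even heven (hderiv 0)
  have hlow : ∀ x y, h x + ⟪G x, y - x⟫ ≤ h y := fun x y => by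
    rw [hdef, hdef, real_inner_smul_left]
    exact hconv.add_mul_le_of_add_le (hderiv _)
      (hconv.deriv_nonneg_of_nonneg hderiv h0 (le_max_right _ _))
      (max_infDist_sub_add_inner_thickeningNormal_le hCconv hproj hε.le x y)
  have hup : ∀ x y, h y ≤ h x + ⟪G x, y - x⟫ + (β.toNNReal : ℝ) / 2 * ‖y - x‖ ^ 2 :=
    fun x y => by
      rw [hdef, hdef, real_inner_smul_left]
      exact le_add_mul_add_sq_of_sq_le hderiv hlip h0 (le_max_right _ _)
        (max_infDist_sub_add_inner_thickeningNormal_le hCconv hproj hε.le x y)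
        (max_infDist_sub_sq_le hCconv hproj hε.le x y)
  have hgrad : ∀ x, HasGradientAt h (G x) x := fun x =>
    hasGradientAt_of_abs_sub_sub_inner_le ((β.toNNReal : ℝ) / 2) fun y => by
      have : 0 ≤ (β.toNNReal : ℝ) / 2 * ‖y - x‖ ^ 2 := by positivity
      exact abs_le.2 ⟨by linarith [hlow x y], by linarith [hup x y]⟩
  have hG : (fun x => gradient h x) = G := funext fun x => (hgrad x).gradient
  refine ⟨convexOn_univ_of_add_inner_le hlow, fun x => (hgrad x).differentiableAt,
    hG ▸ lipschitzWith_of_add_inner_le_of_le_add_inner_add_sq (by simpa using hβ) hlow hup,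
    fun x => ⟨fun hx => ?_, fun hx => ?_⟩⟩
  · convert hgrad x using 1
    simp only [G, thickeningNormal, if_pos hx, max_eq_left (sub_nonneg.2 hx.le), smul_smul,
      div_eq_mul_inv]
  · convert hgrad x using 1
    simp only [G, max_eq_right (sub_nonpos.2 hx), h0, zero_smul]

/-- Let `C` be nonempty closed convex in a real Hilbert space, `ε > 0`,
`β > 0`, `ψ : ℝ → ℝ` even convex differentiable with `β`-Lipschitzian derivative, and
`h = ψ ∘ max(d_C − ε, 0)`.  Then `h` is convex and Fréchet differentiable with a
`β`-Lipschitzian gradient; the gradient at `x` is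
`(ψ'(d_C x − ε)/d_C x) • (x − proj_C x)` when `d_C x > ε`, and `0` when `d_C x ≤ ε`. -/
theorem stmt_5 {H : Type*} [NormedAddCommGroup H] [InnerProductSpace ℝ H] [CompleteSpace H]
    (C : Set H) (hCne : C.Nonempty) (hCclosed : IsClosed C) (hCconv : Convex ℝ C)
    (ε : ℝ) (hε : 0 < ε) (β : ℝ) (hβ : 0 < β)
    (ψ : ℝ → ℝ) (heven : ∀ t, ψ (-t) = ψ t) (hconv : ConvexOn ℝ Set.univ ψ)
    (ψ' : ℝ → ℝ) (hderiv : ∀ t, HasDerivAt ψ (ψ' t) t)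
    (hlip : LipschitzWith (Real.toNNReal β) ψ')
    (h : H → ℝ) (hdef : ∀ x, h x = ψ (max (Metric.infDist x C - ε) 0))
    (projC : H → H)
    (hproj : ∀ x, projC x ∈ C ∧ ∀ y ∈ C, dist x (projC x) ≤ dist x y) :
    ConvexOn ℝ Set.univ h ∧
    (∀ x, DifferentiableAt ℝ h x) ∧
    LipschitzWith (Real.toNNReal β) (fun x => gradient h x) ∧
    (∀ x : H,
      (ε < Metric.infDist x C → HasGradientAt h
        ((ψ' (Metric.infDist x C - ε) / Metric.infDist x C) • (x - projC x)) x) ∧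
      (Metric.infDist x C ≤ ε → HasGradientAt h 0 x)) :=
  stmt_5_general C hCconv ε hε β hβ ψ heven hconv ψ' hderiv hlip h hdef projC hproj
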